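/- Let G be a forest. Then the polynomial g(G,4x) (which equals the γ-polynomial of the h*-polynomial of the symmetric edge polytope B_G of type B of G) is the independence polynomial of a finite simple graph; explicitly, g(G,4x) = i(L(G)[K_4], x). In particular, g(G,4x) coincides with the f-polynomial of a flag simplicial complex. -/

import Mathlib

open Polynomial

variable {V : Type} [Fintype V] [DecidableEq V]

open scoped Classical

/-- `M` is a matching of `G`: a finset of edges of `G` that pairwise share no vertex. -/
def IsGMatching (G : SimpleGraph V) (M : Finset (Sym2 V)) : Prop :=
  (M : Set (Sym2 V)) ⊆ G.edgeSet ∧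
    (M : Set (Sym2 V)).Pairwise fun e f => ∀ v : V, ¬ (v ∈ e ∧ v ∈ f)

/-- The set of vertices covered by a finset of edges. -/
def edgeVerts (F : Finset (Sym2 V)) : Set V := {v | ∃ e ∈ F, v ∈ e}

/-- `m_k(G)`: the number of `k`-matchings of `G`. -/
noncomputable def mCount (G : SimpleGraph V) (k : ℕ) : ℕ :=
  Nat.card {M : Finset (Sym2 V) // IsGMatching G M ∧ M.card = k}

/-- The matching generating polynomial `g(G,x) = ∑_k m_k(G) x^k` (over `ℝ`). -/
noncomputable def gPoly (G : SimpleGraph V) : Polynomial ℝ :=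
  ∑ k ∈ Finset.range (Fintype.card V + 1), C (mCount G k : ℝ) * X ^ k

open scoped Classical in
/-- The line graph of `G`: vertices are the edges of `G`, two distinct edges adjacent
iff they share a vertex. -/
def lineGraph (G : SimpleGraph V) : SimpleGraph {e : Sym2 V // e ∈ G.edgeSet} where
  Adj e f := e ≠ f ∧ ∃ v : V, v ∈ (e : Sym2 V) ∧ v ∈ (f : Sym2 V)
  symm := by
    constructor
    rintro e f ⟨hne, v, hv1, hv2⟩
    exact ⟨hne.symm, v, hv2, hv1⟩
  loopless := by
    constructor
    rintro e ⟨hne, -⟩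
    exact hne rfl

/-- `A` is an independent set of the graph `H`. -/
def IsIndepSet {W : Type} (H : SimpleGraph W) (A : Finset W) : Prop :=
  (A : Set W).Pairwise fun a b => ¬ H.Adj a b

/-- `i_k(H)`: the number of independent sets of size `k` in `H`. -/
noncomputable def indepCount {W : Type} (H : SimpleGraph W) (k : ℕ) : ℕ :=
  Nat.card {A : Finset W // IsIndepSet H A ∧ A.card = k}

/-- The independence polynomial `i(H,x) = ∑_k i_k(H) x^k` (over `ℝ`). -/
noncomputable def iPoly {W : Type} [Fintype W] (H : SimpleGraph W) : Polynomial ℝ :=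
  ∑ k ∈ Finset.range (Fintype.card W + 1), C (indepCount H k : ℝ) * X ^ k

/-- The lexicographic product `G[H]`: `(a,x)` adjacent to `(b,y)` iff `a ~ b` in `G`,
or `a = b` and `x ~ y` in `H`. -/
def lexProd {U W : Type} (G : SimpleGraph U) (H : SimpleGraph W) : SimpleGraph (U × W) where
  Adj a b := G.Adj a.1 b.1 ∨ (a.1 = b.1 ∧ H.Adj a.2 b.2)
  symm := by
    constructor
    rintro a b (h | ⟨h1, h2⟩)
    · exact Or.inl h.symm
    · exact Or.inr ⟨h1.symm, h2.symm⟩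
  loopless := by
    constructor
    rintro a (h | ⟨-, h2⟩)
    · exact G.loopless.irrefl _ h
    · exact H.loopless.irrefl _ h2



lemma indep_helper {G : SimpleGraph V}
    {A : Finset ({e : Sym2 V // e ∈ G.edgeSet} × Fin 4)}
    (hA : IsIndepSet (lexProd (lineGraph G) (⊤ : SimpleGraph (Fin 4))) A)
    {a b : {e : Sym2 V // e ∈ G.edgeSet} × Fin 4} (ha : a ∈ A) (hb : b ∈ A) (hab : a ≠ b) :
    a.1 ≠ b.1 ∧ ∀ v : V, ¬ (v ∈ (a.1 : Sym2 V) ∧ v ∈ (b.1 : Sym2 V)) := by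
  have h : ¬ ((lineGraph G).Adj a.1 b.1 ∨
      (a.1 = b.1 ∧ (⊤ : SimpleGraph (Fin 4)).Adj a.2 b.2)) := hA ha hb hab
  push_neg at h
  obtain ⟨h1, h2⟩ := h
  have hfst : a.1 ≠ b.1 := by
    intro he
    have h2' : a.2 = b.2 := by
      by_contra hne
      exact (h2 he) (by simpa using hne)
    exact hab (Prod.ext he h2')
  exact ⟨hfst, fun v hv => h1 ⟨hfst, v, hv.1, hv.2⟩⟩

/-- The inverse direction map: a matching plus a coloring gives an independent set. -/
noncomputable def psiSet {G : SimpleGraph V} {M : Finset (Sym2 V)} (hM : IsGMatching G M)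
    (f : {e // e ∈ M} → Fin 4) : Finset ({e : Sym2 V // e ∈ G.edgeSet} × Fin 4) :=
  M.attach.image (fun e => (⟨e.1, hM.1 e.2⟩, f e))

lemma psiSet_injOn {G : SimpleGraph V} {M : Finset (Sym2 V)} (hM : IsGMatching G M)
    (f : {e // e ∈ M} → Fin 4) :
    Function.Injective (fun e : {e // e ∈ M} => ((⟨e.1, hM.1 e.2⟩, f e) :
      {e : Sym2 V // e ∈ G.edgeSet} × Fin 4)) := by
  intro e e' h
  have : (e : Sym2 V) = e' := congrArg (fun p => (p.1 : Sym2 V)) h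
  exact Subtype.ext this

lemma psiSet_card {G : SimpleGraph V} {M : Finset (Sym2 V)} (hM : IsGMatching G M)
    (f : {e // e ∈ M} → Fin 4) : (psiSet hM f).card = M.card := by
  rw [psiSet, Finset.card_image_of_injective _ (psiSet_injOn hM f), Finset.card_attach]

lemma psiSet_indep {G : SimpleGraph V} {M : Finset (Sym2 V)} (hM : IsGMatching G M)
    (f : {e // e ∈ M} → Fin 4) :
    IsIndepSet (lexProd (lineGraph G) (⊤ : SimpleGraph (Fin 4))) (psiSet hM f) := by
  intro x hx y hy hxy
  rw [Finset.mem_coe, psiSet, Finset.mem_image] at hx hy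
  obtain ⟨e, -, rfl⟩ := hx
  obtain ⟨e', -, rfl⟩ := hy
  have hee : e ≠ e' := fun h => hxy (by rw [h])
  have hval : (e : Sym2 V) ≠ (e' : Sym2 V) := fun h => hee (Subtype.ext h)
  rintro (⟨-, v, hv1, hv2⟩ | ⟨heq, -⟩)
  · exact hM.2 (Finset.mem_coe.mpr e.2) (Finset.mem_coe.mpr e'.2) hval v ⟨hv1, hv2⟩
  · exact hval (congrArg (fun z : {x : Sym2 V // x ∈ G.edgeSet} => (z : Sym2 V)) heq)

lemma indepCount_lex (G : SimpleGraph V) (k : ℕ) :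
    indepCount (lexProd (lineGraph G) (⊤ : SimpleGraph (Fin 4))) k = mCount G k * 4 ^ k := by
  classical
  set H := lexProd (lineGraph G) (⊤ : SimpleGraph (Fin 4)) with hH
  let Ψ : (Σ M : {M : Finset (Sym2 V) // IsGMatching G M ∧ M.card = k},
      ({e // e ∈ M.1} → Fin 4)) →
      {A : Finset ({e : Sym2 V // e ∈ G.edgeSet} × Fin 4) // IsIndepSet H A ∧ A.card = k} :=
    fun p => ⟨psiSet p.1.2.1 p.2, psiSet_indep _ _, by rw [psiSet_card, p.1.2.2]⟩
  have hbij : Function.Bijective Ψ := by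
    constructor
    · rintro ⟨⟨M, hM, hMc⟩, f⟩ ⟨⟨M', hM', hMc'⟩, f'⟩ h
      have hA : psiSet hM f = psiSet hM' f' := congrArg Subtype.val h
      have hMM : M = M' := by
        ext x
        constructor
        · intro hx
          have : (⟨⟨x, hM.1 hx⟩, f ⟨x, hx⟩⟩ :
              {e : Sym2 V // e ∈ G.edgeSet} × Fin 4) ∈ psiSet hM f := by
            rw [psiSet, Finset.mem_image]
            exact ⟨⟨x, hx⟩, Finset.mem_attach _ _, rfl⟩
          rw [hA, psiSet, Finset.mem_image] at this
          obtain ⟨e, -, he⟩ := this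
          have : (e : Sym2 V) = x := congrArg (fun p => (p.1 : Sym2 V)) he
          rw [← this]; exact e.2
        · intro hx
          have : (⟨⟨x, hM'.1 hx⟩, f' ⟨x, hx⟩⟩ :
              {e : Sym2 V // e ∈ G.edgeSet} × Fin 4) ∈ psiSet hM' f' := by
            rw [psiSet, Finset.mem_image]
            exact ⟨⟨x, hx⟩, Finset.mem_attach _ _, rfl⟩
          rw [← hA, psiSet, Finset.mem_image] at this
          obtain ⟨e, -, he⟩ := this
          have : (e : Sym2 V) = x := congrArg (fun p => (p.1 : Sym2 V)) he
          rw [← this]; exact e.2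
      subst hMM
      have hff : f = f' := by
        funext e
        have hmem : (⟨⟨e.1, hM.1 e.2⟩, f e⟩ :
            {x : Sym2 V // x ∈ G.edgeSet} × Fin 4) ∈ psiSet hM f := by
          rw [psiSet, Finset.mem_image]
          exact ⟨e, Finset.mem_attach _ _, rfl⟩
        rw [hA, psiSet, Finset.mem_image] at hmem
        obtain ⟨e', -, he'⟩ := hmem
        have h1 : (e' : Sym2 V) = e := congrArg (fun p => (p.1 : Sym2 V)) he'
        have h2 : e' = e := Subtype.ext h1
        have h3 : f' e' = f e := congrArg Prod.snd he'
        exact h3.symm.trans (congrArg f' h2)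
      subst hff
      rfl
    · rintro ⟨A, hA, hAc⟩
      -- build the matching
      have help := fun {a b} ha hb hab => indep_helper (A := A) hA (a := a) (b := b) ha hb hab
      have hinj : Set.InjOn (fun p : {e : Sym2 V // e ∈ G.edgeSet} × Fin 4 => (p.1 : Sym2 V))
          (A : Set _) := by
        intro a ha b hb hab
        by_contra hne
        exact (help ha hb hne).1 (Subtype.ext hab)
      set M : Finset (Sym2 V) := A.image (fun p => (p.1 : Sym2 V)) with hMdef
      have hMsub : (M : Set (Sym2 V)) ⊆ G.edgeSet := by
        intro x hx
        rw [Finset.mem_coe, hMdef, Finset.mem_image] at hx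
        obtain ⟨p, -, rfl⟩ := hx
        exact p.1.2
      have hMpair : (M : Set (Sym2 V)).Pairwise fun e f => ∀ v : V, ¬ (v ∈ e ∧ v ∈ f) := by
        intro x hx y hy hxy
        rw [Finset.mem_coe, hMdef, Finset.mem_image] at hx hy
        obtain ⟨p, hp, rfl⟩ := hx
        obtain ⟨q, hq, rfl⟩ := hy
        have hpq : p ≠ q := fun h => hxy (by rw [h])
        exact (help hp hq hpq).2
      have hMmatch : IsGMatching G M := ⟨hMsub, hMpair⟩
      have hMcard : M.card = k := by
        rw [hMdef, Finset.card_image_of_injOn hinj, hAc]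
      -- build the coloring via choose
      have huniq : ∀ x : Sym2 V, x ∈ M → ∃! p, p ∈ A ∧ (p.1 : Sym2 V) = x := by
        intro x hx
        rw [hMdef, Finset.mem_image] at hx
        obtain ⟨p, hp, hpx⟩ := hx
        refine ⟨p, ⟨hp, hpx⟩, ?_⟩
        rintro q ⟨hq, hqx⟩
        exact hinj hq hp (hqx.trans hpx.symm)
      let f : {e // e ∈ M} → Fin 4 := fun e => (A.choose _ (huniq e.1 e.2)).2
      refine ⟨⟨⟨M, hMmatch, hMcard⟩, f⟩, ?_⟩
      apply Subtype.ext
      show psiSet hMmatch f = A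
      ext q
      rw [psiSet, Finset.mem_image]
      constructor
      · rintro ⟨e, -, rfl⟩
        have hcm := A.choose_mem _ (huniq e.1 e.2)
        have hcp := A.choose_property _ (huniq e.1 e.2)
        have : (⟨(⟨(e : Sym2 V), hMmatch.1 e.2⟩ : {x : Sym2 V // x ∈ G.edgeSet}), f e⟩ :
            {x : Sym2 V // x ∈ G.edgeSet} × Fin 4) = A.choose _ (huniq e.1 e.2) := by
          apply Prod.ext
          · exact Subtype.ext hcp.symm
          · rfl
        rw [this]; exact hcm
      · intro hq
        have hqM : (q.1 : Sym2 V) ∈ M := by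
          rw [hMdef, Finset.mem_image]; exact ⟨q, hq, rfl⟩
        refine ⟨⟨q.1, hqM⟩, Finset.mem_attach _ _, ?_⟩
        have hcu := (huniq q.1.1 hqM).unique (y₁ := A.choose _ (huniq q.1.1 hqM)) (y₂ := q)
          ⟨A.choose_mem _ (huniq q.1.1 hqM), A.choose_property _ (huniq q.1.1 hqM)⟩ ⟨hq, rfl⟩
        apply Prod.ext
        · exact Subtype.ext rfl
        · show (A.choose _ (huniq q.1.1 hqM)).2 = q.2
          rw [hcu]
  rw [indepCount, mCount, Nat.card_congr (Equiv.ofBijective Ψ hbij).symm,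
    Nat.card_eq_fintype_card, Fintype.card_sigma]
  have : ∀ M : {M : Finset (Sym2 V) // IsGMatching G M ∧ M.card = k},
      Fintype.card ({e // e ∈ M.1} → Fin 4) = 4 ^ k := by
    intro M
    rw [Fintype.card_fun, Fintype.card_fin, Fintype.card_coe, M.2.2]
  simp only [this, Finset.sum_const, Finset.card_univ, smul_eq_mul, Nat.card_eq_fintype_card]

set_option linter.unusedSectionVars false in
lemma mCount_eq_zero {G : SimpleGraph V} {k : ℕ} (hk : Fintype.card V < k) :
    mCount G k = 0 := by
  rw [mCount, Nat.card_eq_zero]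
  left
  constructor
  rintro ⟨M, ⟨hsub, hpair⟩, hcard⟩
  have hinj : Set.InjOn (fun e : Sym2 V => (Quot.out e).1) (M : Set (Sym2 V)) := by
    intro e he f hf hef
    by_contra hne
    exact hpair he hf hne (Quot.out e).1
      ⟨Sym2.out_fst_mem e, by
        rw [show (Quot.out e).1 = (Quot.out f).1 from hef]; exact Sym2.out_fst_mem f⟩
  have hle : M.card ≤ (Finset.univ : Finset V).card :=
    Finset.card_le_card_of_injOn (fun e : Sym2 V => (Quot.out e).1)
      (fun _ _ => Finset.mem_univ _) hinj
  rw [hcard, Finset.card_univ] at hle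
  omega

lemma indepCount_eq_zero {W : Type} [Fintype W] {H : SimpleGraph W} {k : ℕ}
    (hk : Fintype.card W < k) : indepCount H k = 0 := by
  rw [indepCount, Nat.card_eq_zero]
  left
  constructor
  rintro ⟨A, _, hcard⟩
  have := Finset.card_le_univ A
  omega

/-- Let `G` be a forest. Then `g(G,4x)` (the `γ`-polynomial of `h^*` of
the type-B symmetric edge polytope of `G`) equals `i(L(G)[K_4], x)`; in particular it is
the independence polynomial of a finite simple graph, i.e. the `f`-polynomial of a flag
simplicial complex. -/
theorem stmt12 (G : SimpleGraph V) (hG : G.IsAcyclic) :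
    (gPoly G).comp (C 4 * X) =
        iPoly (lexProd (lineGraph G) (⊤ : SimpleGraph (Fin 4))) ∧
    ∃ (U : Type) (_ : Fintype U) (K : SimpleGraph U),
      (gPoly G).comp (C 4 * X) = iPoly K := by

  have key : (gPoly G).comp (C 4 * X) =
      iPoly (lexProd (lineGraph G) (⊤ : SimpleGraph (Fin 4))) := by
    classical
    set N := max (Fintype.card V)
      (Fintype.card ({e : Sym2 V // e ∈ G.edgeSet} × Fin 4)) with hN
    have hL : (gPoly G).comp (C 4 * X) =
        ∑ k ∈ Finset.range (N + 1), C ((mCount G k * 4 ^ k : ℕ) : ℝ) * X ^ k := by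
      rw [gPoly, Polynomial.sum_comp]
      have hterm : ∀ k : ℕ, (C ((mCount G k : ℕ) : ℝ) * X ^ k).comp (C 4 * X)
          = C ((mCount G k * 4 ^ k : ℕ) : ℝ) * X ^ k := by
        intro k
        push_cast
        rw [mul_comp, C_comp, pow_comp, X_comp, mul_pow, ← C_pow, C_mul]
        ring
      rw [Finset.sum_congr rfl (fun k _ => hterm k)]
      apply Finset.sum_subset
      · exact Finset.range_subset_range.mpr (by omega)
      · intro k hk hk2
        rw [Finset.mem_range] at hk hk2
        rw [mCount_eq_zero (by omega), Nat.zero_mul]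
        simp
    have hR : iPoly (lexProd (lineGraph G) (⊤ : SimpleGraph (Fin 4))) =
        ∑ k ∈ Finset.range (N + 1), C ((mCount G k * 4 ^ k : ℕ) : ℝ) * X ^ k := by
      rw [iPoly]
      have hext : (∑ k ∈ Finset.range
            (Fintype.card ({e : Sym2 V // e ∈ G.edgeSet} × Fin 4) + 1),
            C ((indepCount (lexProd (lineGraph G) (⊤ : SimpleGraph (Fin 4))) k : ℕ) : ℝ) * X ^ k)
          = ∑ k ∈ Finset.range (N + 1),
            C ((indepCount (lexProd (lineGraph G) (⊤ : SimpleGraph (Fin 4))) k : ℕ) : ℝ) * X ^ k := by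
        apply Finset.sum_subset
        · exact Finset.range_subset_range.mpr (by omega)
        · intro k hk hk2
          rw [Finset.mem_range] at hk hk2
          rw [indepCount_eq_zero (by omega)]
          simp
      rw [hext]
      exact Finset.sum_congr rfl (fun k _ => by rw [indepCount_lex])
    rw [hL, hR]
  exact ⟨key, _, inferInstance, _, key⟩
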